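/- arXiv:2005.09922 — 3 statements merged into one kernel-verified Lean document; each statement's English description precedes it below -/
import Mathlib

section
/- Let (a_n)_{n≥0} be a strictly positive, decreasing sequence of real numbers with a_0 ≠ 0, such that a_n → 0 (so the power series F(z) = Σ_{n≥0} a_n z^n converges on the closed unit disc). Then F(z) has no zeros in the closed unit disc {z ∈ ℂ : |z| ≤ 1}. -/
/-!
Write `b n = a n - a (n + 1) > 0`, so that `∑ b n = a 0`. Multiplying `F` by `1 - z` gives
`a 0 - (1 - z) F(z) = ∑ b n z ^ (n + 1)`. At a zero `z` of `F` this says that the weighted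
average `∑ (b n / a 0) z ^ (n + 1)` of points of the closed unit disc equals `1`; comparing
real parts forces `z = 1`, where `F(1) = ∑ a n > 0`.
-/

open Filter Topology

theorem Complex.eq_one_of_re_eq_one_of_norm_le_one {z : ℂ} (hre : z.re = 1) (hz : ‖z‖ ≤ 1) :
    z = 1 := by
  have hnorm : ‖z‖ = 1 := le_antisymm hz (hre ▸ Complex.re_le_norm z)
  exact Complex.ext hre (Complex.abs_re_eq_norm.1 (by rw [hre, hnorm, abs_one]))

theorem hasSum_sub_succ_of_antitone {a : ℕ → ℝ} {l : ℝ} (ha : Antitone a)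
    (hl : Tendsto a atTop (𝓝 l)) : HasSum (fun n => a n - a (n + 1)) (a 0 - l) := by
  rw [hasSum_iff_tendsto_nat_of_nonneg (fun n => sub_nonneg.2 (ha n.le_succ))]
  simp_rw [Finset.sum_range_sub']
  exact tendsto_const_nhds.sub hl

theorem HasSum.sub_succ_mul_pow_succ {R : Type*} [CommRing R] [TopologicalSpace R]
    [IsTopologicalRing R] {a : ℕ → R} {z S : R} (h : HasSum (fun n => a n * z ^ n) S) :
    HasSum (fun n => (a n - a (n + 1)) * z ^ (n + 1)) (a 0 - (1 - z) * S) := by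
  have key := (h.mul_left z).sub ((hasSum_nat_add_iff' 1).2 h)
  rw [Finset.sum_range_one, pow_zero, mul_one] at key
  rw [show a 0 - (1 - z) * S = z * S - (S - a 0) by ring]
  exact key.congr_fun fun n => by ring

theorem eq_one_of_hasSum_mul_of_norm_le_one {ι : Type*} {b : ι → ℝ} {w : ι → ℂ} {B : ℝ}
    (hb : ∀ i, 0 ≤ b i) (hw : ∀ i, ‖w i‖ ≤ 1) (hbB : HasSum b B)
    (hbw : HasSum (fun i => (b i : ℂ) * w i) B) {i : ι} (hi : b i ≠ 0) : w i = 1 := by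
  have hre : HasSum (fun i => b i * (w i).re) B := by simpa using Complex.hasSum_re hbw
  have hdefect : HasSum (fun i => b i * (1 - (w i).re)) 0 := by
    simpa [mul_sub] using hbB.sub hre
  have hzero := (hasSum_zero_iff_of_nonneg fun j =>
    mul_nonneg (hb j) (sub_nonneg.2 ((Complex.re_le_norm (w j)).trans (hw j)))).1 hdefect
  have hre_i : (w i).re = 1 := by
    have hterm := congrFun hzero i
    simp only [Pi.zero_apply, mul_eq_zero, hi, false_or, sub_eq_zero] at hterm
    exact hterm.symm
  exact Complex.eq_one_of_re_eq_one_of_norm_le_one hre_i (hw i)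

theorem stmt1_general (a : ℕ → ℝ) (hpos : ∀ n, 0 < a n) (hdec : StrictAnti a)
    (hlim : Tendsto a atTop (nhds 0)) :
    ∀ z : ℂ, ‖z‖ ≤ 1 → ∀ S : ℂ, HasSum (fun n : ℕ => (a n : ℂ) * z ^ n) S → S ≠ 0 := by
  rintro z hz S hS rfl
  have hdiff : HasSum (fun n => a n - a (n + 1)) (a 0) := by
    simpa using hasSum_sub_succ_of_antitone hdec.antitone hlim
  have hdiffz : HasSum (fun n => ((a n - a (n + 1) : ℝ) : ℂ) * z ^ (n + 1)) (a 0 : ℂ) := by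
    simpa using hS.sub_succ_mul_pow_succ
  have hz1 : z = 1 := by
    simpa using eq_one_of_hasSum_mul_of_norm_le_one
      (fun n => sub_nonneg.2 (hdec.antitone n.le_succ))
      (fun n => (norm_pow z _).trans_le (pow_le_one₀ (norm_nonneg z) hz))
      hdiff hdiffz (i := 0) (sub_pos.2 (hdec zero_lt_one)).ne'
  subst hz1
  have hsum : HasSum a 0 := by simpa using Complex.hasSum_re hS
  exact (hpos 0).ne' (congrFun ((hasSum_zero_iff_of_nonneg fun n => (hpos n).le).1 hsum) 0)

/-- a power series with strictly decreasing positive real coefficients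
tending to `0` has no zeros in the closed unit disc (wherever it converges). -/
theorem stmt1 (a : ℕ → ℝ) (hpos : ∀ n, 0 < a n) (hdec : StrictAnti a)
    (h0 : a 0 ≠ 0) (hlim : Tendsto a atTop (nhds 0)) :
    ∀ z : ℂ, ‖z‖ ≤ 1 → ∀ S : ℂ, HasSum (fun n : ℕ => (a n : ℂ) * z ^ n) S → S ≠ 0 :=
  stmt1_general a hpos hdec hlim
end

section
/- For any p ∈ (0,1), the entire function B_p(x) = Σ_{n≥0} (1-p)^{C(n+1,2)} x^n has no zeros in the closed unit disc, and hence there exists a real r > 1 such that B_p has no zeros in the closed disc |x| ≤ r. -/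
/-!
Eneström–Kakeya for power series: if `a` is antitone and nonnegative with `a 0 > 0`, then
`(1 - w) ∑ aₙ wⁿ = a₀ - ∑ (aₙ - aₙ₊₁) wⁿ⁺¹`, and for `‖w‖ < 1` the last series has norm at most
`‖w‖ a₀ < a₀`, so `∑ aₙ wⁿ ≠ 0`. Since `C(n+1,2) = C(n,2) + n`, `B_p(z) = ∑ q^{C(n,2)} (qz)ⁿ` with
`q = 1 - p`, so `B_p` has no zeros in the open disc of radius `q⁻¹ > 1`.
-/

/-- The entire function `B_p(z) = Σ_{n≥0} (1-p)^{C(n+1,2)} z^n` on `ℂ`. -/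
noncomputable def Bc (p : ℝ) (z : ℂ) : ℂ :=
  ∑' n : ℕ, ((1 : ℂ) - (p : ℂ)) ^ ((n + 1).choose 2) * z ^ n

open Finset

theorem hasSum_sub_succ_mul_pow {R : Type*} [CommRing R] [TopologicalSpace R]
    [IsTopologicalRing R] {a : ℕ → R} {w A : R} (h : HasSum (fun n ↦ a n * w ^ n) A) :
    HasSum (fun n ↦ (a n - a (n + 1)) * w ^ (n + 1)) (a 0 - (1 - w) * A) := by
  have hshift : HasSum (fun n ↦ a (n + 1) * w ^ (n + 1)) (A - a 0) := by
    simpa using (hasSum_nat_add_iff' 1).mpr h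
  rw [show a 0 - (1 - w) * A = w * A - (A - a 0) by ring]
  have hterm : (fun n ↦ (a n - a (n + 1)) * w ^ (n + 1)) =
      fun n ↦ w * (a n * w ^ n) - a (n + 1) * w ^ (n + 1) := by
    funext n; ring
  rw [hterm]
  exact (h.mul_left w).sub hshift

theorem sum_range_sub_succ_mul_pow_le {a : ℕ → ℝ} (ha : Antitone a) (ha0 : ∀ n, 0 ≤ a n)
    {x : ℝ} (hx0 : 0 ≤ x) (hx1 : x ≤ 1) (N : ℕ) :
    ∑ n ∈ range N, (a n - a (n + 1)) * x ^ (n + 1) ≤ x * a 0 :=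
  calc ∑ n ∈ range N, (a n - a (n + 1)) * x ^ (n + 1)
      ≤ ∑ n ∈ range N, (a n - a (n + 1)) * x := by
        gcongr with n
        · exact sub_nonneg.mpr (ha n.le_succ)
        · exact pow_le_of_le_one hx0 hx1 n.succ_ne_zero
    _ = x * (a 0 - a N) := by rw [← sum_mul, sum_range_sub', mul_comm]
    _ ≤ x * a 0 := by nlinarith [ha0 N]

theorem tsum_ofReal_mul_pow_ne_zero_of_antitone {𝕜 : Type*} [RCLike 𝕜] {a : ℕ → ℝ}
    (ha : Antitone a) (ha0 : ∀ n, 0 ≤ a n) (hpos : 0 < a 0) {w : 𝕜} (hw : ‖w‖ < 1) :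
    ∑' n, (a n : 𝕜) * w ^ n ≠ 0 := by
  have hnorm_term : ∀ n, ‖(a n : 𝕜) * w ^ n‖ ≤ a 0 * ‖w‖ ^ n := fun n ↦ by
    rw [norm_mul, norm_pow, RCLike.norm_ofReal, abs_of_nonneg (ha0 n)]
    gcongr
    exact ha n.zero_le
  have hsummable : Summable fun n ↦ (a n : 𝕜) * w ^ n :=
    .of_norm_bounded ((summable_geometric_of_lt_one (norm_nonneg w) hw).mul_left _) hnorm_term
  intro hzero
  have hsum := hasSum_sub_succ_mul_pow hsummable.hasSum
  rw [hzero, mul_zero, sub_zero] at hsum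
  have hnorm_diff : ∀ n, ‖((a n : 𝕜) - a (n + 1)) * w ^ (n + 1)‖ =
      (a n - a (n + 1)) * ‖w‖ ^ (n + 1) := fun n ↦ by
    rw [norm_mul, norm_pow, ← RCLike.ofReal_sub, RCLike.norm_ofReal,
      abs_of_nonneg (sub_nonneg.mpr (ha n.le_succ))]
  have hpartial : ∀ N, ∑ n ∈ range N, ‖((a n : 𝕜) - a (n + 1)) * w ^ (n + 1)‖ ≤ ‖w‖ * a 0 :=
    fun N ↦ by
      simpa only [hnorm_diff] using
        sum_range_sub_succ_mul_pow_le ha ha0 (norm_nonneg w) hw.le N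
  have hle : a 0 ≤ ‖w‖ * a 0 :=
    calc a 0 = ‖(a 0 : 𝕜)‖ := by rw [RCLike.norm_ofReal, abs_of_pos hpos]
      _ = ‖∑' n, ((a n : 𝕜) - a (n + 1)) * w ^ (n + 1)‖ := by rw [hsum.tsum_eq]
      _ ≤ ∑' n, ‖((a n : 𝕜) - a (n + 1)) * w ^ (n + 1)‖ :=
        norm_tsum_le_tsum_norm (summable_of_sum_range_le (fun _ ↦ norm_nonneg _) hpartial)
      _ ≤ ‖w‖ * a 0 := Real.tsum_le_of_sum_range_le (fun _ ↦ norm_nonneg _) hpartial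
  exact (mul_lt_of_lt_one_left hpos hw).not_ge hle

theorem Nat.choose_succ_two (n : ℕ) : (n + 1).choose 2 = n.choose 2 + n := by
  rw [Nat.choose_succ_succ', Nat.choose_one_right, add_comm]

theorem Bc_eq_tsum (p : ℝ) (z : ℂ) :
    Bc p z = ∑' n : ℕ, (((1 - p) ^ n.choose 2 : ℝ) : ℂ) * ((1 - p) * z) ^ n := by
  unfold Bc
  congr 1 with n
  push_cast
  rw [Nat.choose_succ_two, pow_add, mul_pow]
  ring

theorem Bc_ne_zero {p : ℝ} (hp0 : 0 ≤ p) (hp1 : p < 1) {z : ℂ} (hz : ‖z‖ < (1 - p)⁻¹) :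
    Bc p z ≠ 0 := by
  have hq : 0 < 1 - p := by linarith
  rw [Bc_eq_tsum]
  refine tsum_ofReal_mul_pow_ne_zero_of_antitone (fun m n hmn ↦ ?_) (fun n ↦ pow_nonneg hq.le _)
    (by rw [Nat.choose_zero_succ, pow_zero]; exact one_pos) ?_
  · exact pow_le_pow_of_le_one hq.le (by linarith) (Nat.choose_le_choose 2 hmn)
  · rw [norm_mul, ← Complex.ofReal_one, ← Complex.ofReal_sub, Complex.norm_real,
      Real.norm_of_nonneg hq.le]
    simpa using (lt_inv_mul_iff₀ hq).mp (by rwa [mul_one])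

/-- for `p ∈ (0,1)`, `B_p` has no zeros in the closed unit disc,
and hence no zeros in some closed disc of radius `r > 1`. -/
theorem stmt2 (p : ℝ) (hp : p ∈ Set.Ioo (0 : ℝ) 1) :
    (∀ z : ℂ, ‖z‖ ≤ 1 → Bc p z ≠ 0) ∧
      ∃ r : ℝ, 1 < r ∧ ∀ z : ℂ, ‖z‖ ≤ r → Bc p z ≠ 0 := by
  obtain ⟨hp0, hp1⟩ := hp
  have hradius : 1 < (1 - p)⁻¹ := (one_lt_inv₀ (by linarith)).mpr (by linarith)
  obtain ⟨r, hr1, hr⟩ := exists_between hradius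
  exact ⟨fun z hz ↦ Bc_ne_zero hp0.le hp1 (hz.trans_lt hradius),
    r, hr1, fun z hz ↦ Bc_ne_zero hp0.le hp1 (hz.trans_lt hr)⟩
end

section
/- Consider the transitive tournament on vertices {1,...,n} with i.i.d. Bernoulli(p) edge weights, p ∈ (0,1), and let X_n be the maximum total weight of a directed path from 1 to n. Then f(n) := E[X_n] satisfies the recurrence f(n) = Σ_{i=2}^{n} (1 - (1-p)^{i-1})(1-p)^{C(i-1,2)} (f(n-i+1) + 1), with f(0) = f(1) = 0. -/
open Finset Filter

noncomputable section

/-- The weight of a path, given as a list of vertices. -/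
def pathWeight (wt : ℕ → ℕ → ℕ) (l : List ℕ) : ℕ :=
  ((l.zip l.tail).map fun e => wt e.1 e.2).sum

/-- `l` is a directed path from `a` to `b` in the transitive tournament on `ℕ`. -/
def IsPath (a b : ℕ) (l : List ℕ) : Prop :=
  l.Chain' (· < ·) ∧ l.head? = some a ∧ l.getLast? = some b

/-- `maxW wt a b` is the maximum weight of a directed path from `a` to `b`. -/
def maxW (wt : ℕ → ℕ → ℕ) (a b : ℕ) : ℕ :=
  sSup {m | ∃ l, IsPath a b l ∧ pathWeight wt l = m}

/-- The edges of the transitive tournament on `n` vertices. -/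
abbrev Edge (n : ℕ) := {e : Fin n × Fin n // (e.1 : ℕ) < (e.2 : ℕ)}

/-- The sample space: an assignment of a `0/1` weight (a `Bool`) to each edge. -/
abbrev Omega (n : ℕ) := Edge n → Bool

/-- The weight function on vertices `1, …, n` induced by an outcome `w`. -/
def wtOf {n : ℕ} (w : Omega n) (a b : ℕ) : ℕ :=
  if h : 1 ≤ a ∧ a < b ∧ b ≤ n then
    (if w ⟨(⟨a - 1, by omega⟩, ⟨b - 1, by omega⟩), by show a - 1 < b - 1; omega⟩
      then 1 else 0)
  else 0

/-- The probability of outcome `w`: each edge independently has weight 1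
with probability `p` and weight 0 with probability `1 - p`. -/
def prob (p : ℝ) {n : ℕ} (w : Omega n) : ℝ :=
  ∏ e : Edge n, (if w e then p else 1 - p)

/-- `X n w` : the maximum weight of a directed path from vertex `1` to vertex `n`. -/
def X (n : ℕ) (w : Omega n) : ℕ := maxW (wtOf w) 1 n

/-- The expectation of `X n` under i.i.d. Bernoulli(p) edge weights. -/
def EX (p : ℝ) (n : ℕ) : ℝ := ∑ w : Omega n, prob p w * (X n w : ℝ)

/-!
Condition on the first vertex `i` entered by an edge of weight `1`. All edges among the
vertices `1, …, i - 1` then have weight `0` and some edge `j → i` has weight `1`, so an optimal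
path from `1` to `n` reaches `i` having gained exactly `1` and then continues optimally in the
tournament on `i, …, n`, a copy of the one on `n - i + 1` vertices. These three sets of edges
are disjoint, so the probability `(1 - p) ^ C(i - 1, 2) * (1 - (1 - p) ^ (i - 1))` of the
event factors out of the expectation `f(n - i + 1) + 1` of the rest.
-/

section Paths

variable {wt : ℕ → ℕ → ℕ} {a b c i : ℕ}

lemma isPath_iff {l : List ℕ} :
    IsPath a b l ↔ l.IsChain (· < ·) ∧ l.head? = some a ∧ l.getLast? = some b :=
  Iff.rfl

lemma not_isPath_nil (a b : ℕ) : ¬ IsPath a b [] := by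
  simp [isPath_iff]

lemma isPath_singleton_iff {x : ℕ} : IsPath a b [x] ↔ x = a ∧ x = b := by
  simp [isPath_iff]

lemma isPath_cons_cons_iff {x : ℕ} {t : List ℕ} :
    IsPath a b (x :: c :: t) ↔ x = a ∧ a < c ∧ IsPath c b (c :: t) := by
  simp only [isPath_iff, List.isChain_cons_cons, List.head?_cons, List.getLast?_cons_cons,
    Option.some.injEq, true_and]
  constructor
  · rintro ⟨⟨hxc, hct⟩, rfl, hb⟩
    exact ⟨rfl, hxc, hct, hb⟩
  · rintro ⟨rfl, hac, hct, hb⟩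
    exact ⟨⟨hac, hct⟩, rfl, hb⟩

lemma IsPath.le : ∀ {a b : ℕ} {l : List ℕ}, IsPath a b l → a ≤ b
  | _, _, [], h => (not_isPath_nil _ _ h).elim
  | _, _, [_], h => by obtain ⟨rfl, rfl⟩ := isPath_singleton_iff.1 h; rfl
  | _, _, _ :: _ :: _, h => by
    obtain ⟨-, hac, hct⟩ := isPath_cons_cons_iff.1 h
    exact hac.le.trans hct.le

lemma pathWeight_cons_cons (wt : ℕ → ℕ → ℕ) (x y : ℕ) (t : List ℕ) :
    pathWeight wt (x :: y :: t) = wt x y + pathWeight wt (y :: t) := rfl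

lemma pathWeight_le_sub (hwt : ∀ x y, wt x y ≤ 1) :
    ∀ {a b : ℕ} {l : List ℕ}, IsPath a b l → pathWeight wt l ≤ b - a
  | _, _, [], h => (not_isPath_nil _ _ h).elim
  | _, _, [_], _ => Nat.zero_le _
  | _, _, x :: y :: _, h => by
    obtain ⟨rfl, hxy, hyt⟩ := isPath_cons_cons_iff.1 h
    have := pathWeight_le_sub hwt hyt
    have := hyt.le
    have := hwt x y
    rw [pathWeight_cons_cons]
    omega

lemma bddAbove_pathWeights (hwt : ∀ x y, wt x y ≤ 1) (a b : ℕ) :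
    BddAbove {m | ∃ l, IsPath a b l ∧ pathWeight wt l = m} :=
  ⟨b - a, by rintro _ ⟨l, hl, rfl⟩; exact pathWeight_le_sub hwt hl⟩

lemma maxW_le_sub (hwt : ∀ x y, wt x y ≤ 1) (a b : ℕ) : maxW wt a b ≤ b - a :=
  csSup_le' fun _ ⟨_, hl, hm⟩ => hm ▸ pathWeight_le_sub hwt hl

lemma maxW_self (hwt : ∀ x y, wt x y ≤ 1) (a : ℕ) : maxW wt a a = 0 := by
  simpa using maxW_le_sub hwt a a

lemma pathWeight_le_maxW (hwt : ∀ x y, wt x y ≤ 1) {l : List ℕ} (hl : IsPath a b l) :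
    pathWeight wt l ≤ maxW wt a b :=
  le_csSup (bddAbove_pathWeights hwt a b) ⟨l, hl, rfl⟩

lemma exists_isPath_pathWeight_eq_maxW (hwt : ∀ x y, wt x y ≤ 1) (hab : a ≤ b) :
    ∃ l, IsPath a b l ∧ pathWeight wt l = maxW wt a b := by
  refine Nat.sSup_mem ?_ (bddAbove_pathWeights hwt a b)
  rcases hab.eq_or_lt with rfl | hab
  · exact ⟨_, [a], isPath_singleton_iff.2 ⟨rfl, rfl⟩, rfl⟩
  · exact ⟨_, [a, b], isPath_cons_cons_iff.2 ⟨rfl, hab, isPath_singleton_iff.2 ⟨rfl, rfl⟩⟩, rfl⟩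

theorem maxW_eq_sup (hwt : ∀ x y, wt x y ≤ 1) (hab : a < b) :
    maxW wt a b = (Ioc a b).sup fun c => wt a c + maxW wt c b := by
  refine le_antisymm (csSup_le' ?_) (Finset.sup_le fun c hc => ?_)
  · rintro _ ⟨l, hl, rfl⟩
    match l, hl with
    | [], hl => exact (not_isPath_nil _ _ hl).elim
    | [_], hl => obtain ⟨rfl, rfl⟩ := isPath_singleton_iff.1 hl; omega
    | _ :: c :: t, hl =>
      obtain ⟨rfl, hac, hct⟩ := isPath_cons_cons_iff.1 hl
      rw [pathWeight_cons_cons]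
      exact le_sup_of_le (mem_Ioc.2 ⟨hac, hct.le⟩)
        (Nat.add_le_add_left (pathWeight_le_maxW hwt hct) _)
  · obtain ⟨hac, hcb⟩ := mem_Ioc.1 hc
    obtain ⟨l, hl, hlw⟩ := exists_isPath_pathWeight_eq_maxW (wt := wt) hwt hcb
    match l, hl with
    | [], hl => exact (not_isPath_nil _ _ hl).elim
    | x :: t, hl =>
      obtain rfl : x = c := by simpa using (isPath_iff.1 hl).2.1
      rw [← hlw, ← pathWeight_cons_cons]
      exact pathWeight_le_maxW hwt (isPath_cons_cons_iff.2 ⟨rfl, hac, hl⟩)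

lemma add_maxW_le_maxW (hwt : ∀ x y, wt x y ≤ 1) (hac : a < c) (hcb : c ≤ b) :
    wt a c + maxW wt c b ≤ maxW wt a b := by
  rw [maxW_eq_sup hwt (hac.trans_le hcb)]
  exact le_sup (f := fun c => wt a c + maxW wt c b) (mem_Ioc.2 ⟨hac, hcb⟩)

lemma maxW_le_maxW_of_le (hwt : ∀ x y, wt x y ≤ 1) (hac : a ≤ c) (hcb : c ≤ b) :
    maxW wt c b ≤ maxW wt a b := by
  rcases hac.eq_or_lt with rfl | hac
  · rfl
  · exact (Nat.le_add_left _ _).trans (add_maxW_le_maxW hwt hac hcb)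

theorem maxW_shift {wt' : ℕ → ℕ → ℕ} (hwt : ∀ x y, wt x y ≤ 1) (hwt' : ∀ x y, wt' x y ≤ 1)
    {k m : ℕ} (h : ∀ x y, 1 ≤ x → y ≤ m → wt' x y = wt (x + k) (y + k)) (ha : 1 ≤ a)
    (hbm : b ≤ m) : maxW wt' a b = maxW wt (a + k) (b + k) := by
  induction hd : b - a using Nat.strong_induction_on generalizing a with
  | _ d ih =>
  rcases lt_trichotomy a b with hab | rfl | hba
  · rw [maxW_eq_sup hwt' hab, maxW_eq_sup hwt (by omega), ← map_add_right_Ioc, sup_map]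
    refine Finset.sup_congr rfl fun c hc => ?_
    obtain ⟨hac, hcb⟩ := mem_Ioc.1 hc
    simp only [Function.comp_apply, addRightEmbedding_apply]
    rw [h a c ha (hcb.trans hbm), ih (b - c) (by omega) (by omega) rfl]
  · rw [maxW_self hwt', maxW_self hwt]
  · have := maxW_le_sub hwt' a b
    have := maxW_le_sub hwt (a + k) (b + k)
    omega

lemma maxW_eq_zero_of_forall_eq_zero (h : ∀ x y, wt x y = 0) (a b : ℕ) : maxW wt a b = 0 :=
  Nat.le_zero.1 <| csSup_le' fun _ ⟨_, _, hm⟩ => by simp [← hm, pathWeight, h]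

lemma maxW_le_maxW_add_one (hwt : ∀ x y, wt x y ≤ 1) (hzero : ∀ x y, y < i → wt x y = 0)
    (hib : i ≤ b) (hai : a < i) : maxW wt a b ≤ maxW wt i b + 1 := by
  induction hd : i - a using Nat.strong_induction_on generalizing a with
  | _ d ih =>
  rw [maxW_eq_sup hwt (hai.trans_le hib)]
  refine Finset.sup_le fun c hc => ?_
  obtain ⟨hac, hcb⟩ := mem_Ioc.1 hc
  by_cases hci : c < i
  · rw [hzero a c hci, zero_add]
    exact ih (i - c) (by omega) hci rfl
  · have := hwt a c
    have := maxW_le_maxW_of_le hwt (not_lt.1 hci) hcb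
    omega

theorem maxW_eq_maxW_add_one {j : ℕ} (hwt : ∀ x y, wt x y ≤ 1)
    (hzero : ∀ x y, y < i → wt x y = 0) (haj : a ≤ j) (hji : j < i) (hedge : wt j i = 1)
    (hib : i ≤ b) : maxW wt a b = maxW wt i b + 1 := by
  refine le_antisymm (maxW_le_maxW_add_one hwt hzero hib (haj.trans_lt hji)) ?_
  calc maxW wt i b + 1 = wt j i + maxW wt i b := by rw [hedge, add_comm]
    _ ≤ maxW wt j b := add_maxW_le_maxW hwt hji hib
    _ ≤ maxW wt a b := maxW_le_maxW_of_le hwt haj (hji.le.trans hib)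

def IsFirstHit (wt : ℕ → ℕ → ℕ) (i : ℕ) : Prop :=
  (∀ x y, y < i → wt x y = 0) ∧ ∃ j, wt j i = 1

lemma IsFirstHit.eq {i' : ℕ} (h : IsFirstHit wt i) (h' : IsFirstHit wt i') : i = i' := by
  obtain ⟨hzero, j, hj⟩ := h
  obtain ⟨hzero', j', hj'⟩ := h'
  rcases lt_trichotomy i i' with hlt | heq | hlt
  · simp [hzero' j i hlt] at hj
  · exact heq
  · simp [hzero j' i' hlt] at hj'

lemma exists_isFirstHit (hwt : ∀ x y, wt x y ≤ 1) (h : ∃ x y, wt x y ≠ 0) :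
    ∃ i, IsFirstHit wt i := by
  classical
  have hex : ∃ i j, wt j i = 1 := by
    obtain ⟨x, y, hxy⟩ := h
    exact ⟨y, x, by have := hwt x y; omega⟩
  refine ⟨Nat.find hex, fun x y hy => ?_, Nat.find_spec hex⟩
  have := hwt x y
  by_contra hne
  exact Nat.find_min hex hy ⟨x, by omega⟩

open Classical in
theorem maxW_eq_sum_isFirstHit {n : ℕ} (hwt : ∀ x y, wt x y ≤ 1)
    (hsupp : ∀ x y, wt x y ≠ 0 → 1 ≤ x ∧ x < y ∧ y ≤ n) :
    (maxW wt 1 n : ℝ) = ∑ i ∈ Icc 2 n, if IsFirstHit wt i then (maxW wt i n : ℝ) + 1 else 0 := by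
  by_cases h : ∃ x y, wt x y ≠ 0
  · obtain ⟨i, hi⟩ := exists_isFirstHit hwt h
    obtain ⟨j, hj⟩ := hi.2
    obtain ⟨h1j, hji, hin⟩ := hsupp j i (by omega)
    rw [sum_eq_single_of_mem i (mem_Icc.2 ⟨by omega, hin⟩)
      fun i' _ hi' => if_neg fun h' => hi' (h'.eq hi), if_pos hi,
      maxW_eq_maxW_add_one hwt hi.1 h1j hji hj hin]
    push_cast
    rfl
  · simp only [not_exists, not_not] at h
    rw [maxW_eq_zero_of_forall_eq_zero h, Nat.cast_zero]
    refine (sum_eq_zero fun i _ => if_neg ?_).symm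
    rintro ⟨-, j, hj⟩
    simp [h] at hj

end Paths

section Bernoulli

variable {α β γ : Type*} [Fintype α] [Fintype β] [Fintype γ]

def bernoulliWeight (p : ℝ) (w : α → Bool) : ℝ :=
  ∏ a, if w a then p else 1 - p

variable [DecidableEq α] [DecidableEq β] [DecidableEq γ] (p : ℝ)

lemma sum_bernoulliWeight : ∑ w : α → Bool, bernoulliWeight p w = 1 :=
  (Fintype.prod_sum fun (_ : α) (b : Bool) => if b then p else 1 - p).symm.trans (by simp)

lemma sum_bernoulliWeight_mul_sumElim (F : (β → Bool) → ℝ) (G : (γ → Bool) → ℝ) :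
    ∑ u : β ⊕ γ → Bool, bernoulliWeight p u * (F (u ∘ Sum.inl) * G (u ∘ Sum.inr)) =
      (∑ u, bernoulliWeight p u * F u) * ∑ v, bernoulliWeight p v * G v := by
  rw [sum_mul_sum, ← Fintype.sum_prod_type', ← (Equiv.sumArrowEquivProdArrow β γ Bool).sum_comp]
  refine sum_congr rfl fun u _ => ?_
  rw [bernoulliWeight, Fintype.prod_sum_type, mul_mul_mul_comm]
  rfl

lemma sum_bernoulliWeight_mul_comp {ι : β → α} (hι : Function.Injective ι)
    (G : (β → Bool) → ℝ) :
    ∑ w : α → Bool, bernoulliWeight p w * G (w ∘ ι) = ∑ u, bernoulliWeight p u * G u := by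
  classical
  let e : β ⊕ {a // a ∉ Set.range ι} ≃ α :=
    ((Equiv.ofInjective ι hι).sumCongr (Equiv.refl _)).trans (Equiv.sumCompl _)
  have hprod : ∀ w : α → Bool, bernoulliWeight p (w ∘ e) = bernoulliWeight p w :=
    fun w => e.prod_comp fun a => if w a then p else 1 - p
  calc ∑ w : α → Bool, bernoulliWeight p w * G (w ∘ ι)
      = ∑ u : β ⊕ {a // a ∉ Set.range ι} → Bool,
          bernoulliWeight p u * (G (u ∘ Sum.inl) * 1) :=
        Fintype.sum_equiv (e.arrowCongr (Equiv.refl Bool)).symm _ _ fun w => by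
          rw [mul_one]
          exact congrArg₂ _ (hprod w).symm rfl
    _ = ∑ u, bernoulliWeight p u * G u :=
        (sum_bernoulliWeight_mul_sumElim p G fun _ => 1).trans (by simp [sum_bernoulliWeight])

lemma sum_bernoulliWeight_mul_comp_mul_comp {ι₁ : β → α} {ι₂ : γ → α}
    (h₁ : Function.Injective ι₁) (h₂ : Function.Injective ι₂) (h₁₂ : ∀ b c, ι₁ b ≠ ι₂ c)
    (F : (β → Bool) → ℝ) (G : (γ → Bool) → ℝ) :
    ∑ w : α → Bool, bernoulliWeight p w * (F (w ∘ ι₁) * G (w ∘ ι₂)) =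
      (∑ u, bernoulliWeight p u * F u) * ∑ v, bernoulliWeight p v * G v := by
  rw [← sum_bernoulliWeight_mul_sumElim, ← sum_bernoulliWeight_mul_comp p (h₁.sumElim h₂ h₁₂)]
  rfl

lemma sum_bernoulliWeight_mul_ite_forall_eq_false :
    ∑ u : β → Bool, bernoulliWeight p u * (if ∀ b, u b = false then 1 else 0) =
      (1 - p) ^ Fintype.card β := by
  have hfalse : ∀ u : β → Bool, (∀ b, u b = false) ↔ (fun _ => false) = u :=
    fun u => funext_iff.symm.trans eq_comm
  simp only [hfalse, mul_ite, mul_one, mul_zero, sum_ite_eq, mem_univ, if_true]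
  simp [bernoulliWeight]

lemma sum_bernoulliWeight_mul_ite_exists_eq_true :
    ∑ u : β → Bool, bernoulliWeight p u * (if ∃ b, u b = true then 1 else 0) =
      1 - (1 - p) ^ Fintype.card β := by
  have hcompl : ∀ u : β → Bool, (if ∃ b, u b = true then (1 : ℝ) else 0) =
      1 - if ∀ b, u b = false then 1 else 0 := by
    intro u
    by_cases h : ∃ b, u b = true
    · obtain ⟨b, hb⟩ := h
      rw [if_pos ⟨b, hb⟩, if_neg fun h' => by simp [h' b] at hb, sub_zero]
    · simp only [not_exists, Bool.not_eq_true] at h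
      rw [if_neg (by simp [h]), if_pos h, sub_self]
  simp only [hcompl, mul_sub, mul_one, sum_sub_distrib, sum_bernoulliWeight,
    sum_bernoulliWeight_mul_ite_forall_eq_false]

lemma sum_bernoulliWeight_mul_ite_mul_ite_mul {δ : Type*} [Fintype δ] [DecidableEq δ]
    {ι₁ : β → α} {ι₂ : γ → α} {ι₃ : δ → α} (h₁ : Function.Injective ι₁)
    (h₂ : Function.Injective ι₂) (h₃ : Function.Injective ι₃) (h₁₂ : ∀ b c, ι₁ b ≠ ι₂ c)
    (h₁₃ : ∀ b d, ι₁ b ≠ ι₃ d) (h₂₃ : ∀ c d, ι₂ c ≠ ι₃ d) (G : (δ → Bool) → ℝ) :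
    ∑ w : α → Bool, bernoulliWeight p w *
        ((if ∀ b, w (ι₁ b) = false then 1 else 0) * (if ∃ c, w (ι₂ c) = true then 1 else 0) *
          G (w ∘ ι₃)) =
      (1 - p) ^ Fintype.card β * (1 - (1 - p) ^ Fintype.card γ) *
        ∑ v, bernoulliWeight p v * G v := by
  have h₁₂₃ : ∀ x d, Sum.elim ι₁ ι₂ x ≠ ι₃ d := by
    rintro (b | c) d
    exacts [h₁₃ b d, h₂₃ c d]
  rw [← sum_bernoulliWeight_mul_ite_forall_eq_false (β := β) p,
    ← sum_bernoulliWeight_mul_ite_exists_eq_true (β := γ) p, ← sum_bernoulliWeight_mul_sumElim,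
    ← sum_bernoulliWeight_mul_comp_mul_comp p (h₁.sumElim h₂ h₁₂) h₃ h₁₂₃]
  rfl

end Bernoulli

section Tournament

variable {n : ℕ}

lemma card_edge (m : ℕ) : Fintype.card (Edge m) = m.choose 2 := by
  have := Fintype.card_product_filter_lt (α := Fin m)
  rw [Fintype.card_fin] at this
  rw [Fintype.card_subtype]
  exact this

def edgeShift (k : ℕ) {m : ℕ} (h : k + m ≤ n) (e : Edge m) : Edge n :=
  ⟨(⟨e.1.1 + k, by omega⟩, ⟨e.1.2 + k, by omega⟩), by simpa using e.2⟩

lemma edgeShift_injective (k : ℕ) {m : ℕ} (h : k + m ≤ n) :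
    Function.Injective (edgeShift k h) := by
  intro e e' he
  simp only [edgeShift, Subtype.mk.injEq, Prod.mk.injEq, Fin.mk.injEq, add_left_inj] at he
  exact Subtype.ext (Prod.ext (Fin.ext he.1) (Fin.ext he.2))

/-- Vertices count from `0` here: these are the edges into vertex `v + 1` of `wtOf`. -/
def edgeInto {v : ℕ} (hv : v < n) (j : Fin v) : Edge n :=
  ⟨(⟨j, by omega⟩, ⟨v, hv⟩), j.2⟩

lemma edgeInto_injective {v : ℕ} (hv : v < n) : Function.Injective (edgeInto hv) := by
  intro j j' h
  simpa [edgeInto, Fin.ext_iff] using h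

lemma wtOf_le_one (w : Omega n) (a b : ℕ) : wtOf w a b ≤ 1 := by
  unfold wtOf
  split_ifs <;> simp

lemma wtOf_eq_one_iff (w : Omega n) {a b : ℕ} :
    wtOf w a b = 1 ↔ ∃ e : Edge n, w e = true ∧ (e.1.1 : ℕ) + 1 = a ∧ (e.1.2 : ℕ) + 1 = b := by
  unfold wtOf
  split_ifs with hab hw
  · exact iff_of_true rfl ⟨_, hw, by simp; omega, by simp; omega⟩
  · refine iff_of_false (by simp) ?_
    rintro ⟨e, he, rfl, rfl⟩
    exact hw (by simpa using he)
  · refine iff_of_false (by simp) ?_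
    rintro ⟨e, -, rfl, rfl⟩
    exact hab ⟨by omega, by simpa using e.2, by omega⟩

lemma bounds_of_wtOf_ne_zero (w : Omega n) (x y : ℕ) (h : wtOf w x y ≠ 0) :
    1 ≤ x ∧ x < y ∧ y ≤ n := by
  have := wtOf_le_one w x y
  obtain ⟨e, -, rfl, rfl⟩ := (wtOf_eq_one_iff w (a := x) (b := y)).1 (by omega)
  have := e.2
  omega

lemma wtOf_comp_edgeShift (w : Omega n) {k m a b : ℕ} (h : k + m ≤ n) (ha : 1 ≤ a)
    (hb : b ≤ m) : wtOf (w ∘ edgeShift k h) a b = wtOf w (a + k) (b + k) := by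
  unfold wtOf
  by_cases hab : a < b
  · rw [dif_pos ⟨ha, hab, hb⟩, dif_pos ⟨by omega, by omega, by omega⟩]
    simp only [Function.comp_apply]
    congr 3
    ext <;> simp [edgeShift] <;> omega
  · rw [dif_neg (by omega), dif_neg (by omega)]

lemma maxW_wtOf_eq_X (w : Omega n) {i : ℕ} (hi : 1 ≤ i) (hin : i ≤ n) :
    maxW (wtOf w) i n =
      X (n - i + 1) (w ∘ edgeShift (i - 1) (by omega : i - 1 + (n - i + 1) ≤ n)) := by
  rw [X, maxW_shift (wtOf_le_one w) (wtOf_le_one _)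
    (fun x y hx hy => wtOf_comp_edgeShift w _ hx hy) le_rfl le_rfl]
  congr 1 <;> omega

lemma isFirstHit_wtOf_iff (w : Omega n) {i : ℕ} (hi : 1 ≤ i) (hin : i ≤ n) :
    IsFirstHit (wtOf w) i ↔
      (∀ e, w (edgeShift 0 (by omega : 0 + (i - 1) ≤ n) e) = false) ∧
        ∃ j, w (edgeInto (by omega : i - 1 < n) j) = true := by
  refine and_congr ⟨fun h e => ?_, fun h x y hy => ?_⟩ ⟨fun ⟨j, hj⟩ => ?_, fun ⟨j, hj⟩ => ?_⟩
  · have hzero := h (e.1.1 + 1) (e.1.2 + 1) (by have := e.1.2.isLt; omega)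
    by_contra hne
    rw [Bool.not_eq_false] at hne
    have hone := (wtOf_eq_one_iff w (a := e.1.1 + 1) (b := e.1.2 + 1)).2 ⟨_, hne, rfl, rfl⟩
    omega
  · have := wtOf_le_one w x y
    by_contra hne
    obtain ⟨e, he, rfl, rfl⟩ := (wtOf_eq_one_iff w (a := x) (b := y)).1 (by omega)
    exact Bool.false_ne_true ((h ⟨(⟨e.1.1, by omega⟩, ⟨e.1.2, by omega⟩), e.2⟩).symm.trans he)
  · obtain ⟨e, he, -, hei⟩ := (wtOf_eq_one_iff w).1 hj
    refine ⟨⟨e.1.1, by omega⟩, (congrArg w ?_).trans he⟩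
    ext <;> simp [edgeInto]
    omega
  · exact ⟨j + 1, (wtOf_eq_one_iff w).2 ⟨_, hj, rfl, by simp [edgeInto]; omega⟩⟩

end Tournament

open Classical in
lemma ite_isFirstHit_wtOf {n i : ℕ} (w : Omega n) (hi : 1 ≤ i) (hin : i ≤ n) :
    (if IsFirstHit (wtOf w) i then (maxW (wtOf w) i n : ℝ) + 1 else 0) =
      (if ∀ e, w (edgeShift 0 (by omega : 0 + (i - 1) ≤ n) e) = false then 1 else 0) *
        (if ∃ j, w (edgeInto (by omega : i - 1 < n) j) = true then 1 else 0) *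
        ((X (n - i + 1) (w ∘ edgeShift (i - 1) (by omega : i - 1 + (n - i + 1) ≤ n)) : ℝ) + 1) := by
  simp only [isFirstHit_wtOf_iff w hi hin, maxW_wtOf_eq_X w hi hin]
  split_ifs <;> simp_all

open Classical in
lemma sum_prob_mul_ite_isFirstHit (p : ℝ) {n i : ℕ} (hi : 2 ≤ i) (hin : i ≤ n) :
    ∑ w : Omega n, prob p w * (if IsFirstHit (wtOf w) i then (maxW (wtOf w) i n : ℝ) + 1 else 0)
      = (1 - (1 - p) ^ (i - 1)) * (1 - p) ^ ((i - 1).choose 2) * (EX p (n - i + 1) + 1) := by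
  have h₁ : 0 + (i - 1) ≤ n := by omega
  have h₂ : i - 1 < n := by omega
  have h₃ : i - 1 + (n - i + 1) ≤ n := by omega
  have h₁₂ (e : Edge (i - 1)) (j : Fin (i - 1)) : edgeShift 0 h₁ e ≠ edgeInto h₂ j :=
    ne_of_apply_ne (fun e : Edge n => (e.1.2 : ℕ)) <| by
      have := e.1.2.isLt
      simp only [edgeShift, edgeInto]
      omega
  have h₁₃ (e : Edge (i - 1)) (d : Edge (n - i + 1)) : edgeShift 0 h₁ e ≠ edgeShift _ h₃ d :=
    ne_of_apply_ne (fun e : Edge n => (e.1.2 : ℕ)) <| by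
      have := e.1.2.isLt
      simp only [edgeShift]
      omega
  have h₂₃ (j : Fin (i - 1)) (d : Edge (n - i + 1)) : edgeInto h₂ j ≠ edgeShift _ h₃ d :=
    ne_of_apply_ne (fun e : Edge n => (e.1.2 : ℕ)) <| by
      have := d.2
      simp only [edgeShift, edgeInto]
      omega
  have hEX : ∑ v, bernoulliWeight p v * ((X (n - i + 1) v : ℝ) + 1) = EX p (n - i + 1) + 1 := by
    simp only [mul_add, mul_one, sum_add_distrib, sum_bernoulliWeight]
    rfl
  have key := sum_bernoulliWeight_mul_ite_mul_ite_mul p (edgeShift_injective _ h₁)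
    (edgeInto_injective h₂) (edgeShift_injective _ h₃) h₁₂ h₁₃ h₂₃
    fun v => (X (n - i + 1) v : ℝ) + 1
  rw [hEX, card_edge, Fintype.card_fin] at key
  rw [mul_comm (1 - (1 - p) ^ (i - 1)), ← key]
  refine sum_congr rfl fun w _ => ?_
  rw [ite_isFirstHit_wtOf w (by omega) hin]
  -- the two sides differ only in the `Decidable` instance of the `∃` over `Fin (i - 1)`
  congr

lemma EX_eq_zero_of_le_one (p : ℝ) {n : ℕ} (hn : n ≤ 1) : EX p n = 0 :=
  sum_eq_zero fun w _ => by
    rw [X, Nat.eq_zero_of_le_zero ((maxW_le_sub (wtOf_le_one w) 1 n).trans (by omega)),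
      Nat.cast_zero, mul_zero]

open Finset in
theorem stmt3_general (p : ℝ) :
    EX p 0 = 0 ∧ EX p 1 = 0 ∧
      ∀ n : ℕ, 2 ≤ n →
        EX p n = ∑ i ∈ Finset.Icc 2 n,
          (1 - (1 - p) ^ (i - 1)) * (1 - p) ^ ((i - 1).choose 2) * (EX p (n - i + 1) + 1) := by
  classical
  refine ⟨EX_eq_zero_of_le_one p zero_le_one, EX_eq_zero_of_le_one p le_rfl, fun n _ => ?_⟩
  calc EX p n
      = ∑ w : Omega n, prob p w * ∑ i ∈ Icc 2 n,
          if IsFirstHit (wtOf w) i then (maxW (wtOf w) i n : ℝ) + 1 else 0 :=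
        sum_congr rfl fun w _ => by
          rw [X, maxW_eq_sum_isFirstHit (wtOf_le_one w) (bounds_of_wtOf_ne_zero w)]
    _ = ∑ i ∈ Icc 2 n, ∑ w : Omega n, prob p w *
          if IsFirstHit (wtOf w) i then (maxW (wtOf w) i n : ℝ) + 1 else 0 := by
        simp_rw [mul_sum]
        exact sum_comm
    _ = _ := sum_congr rfl fun i hi =>
        sum_prob_mul_ite_isFirstHit p (mem_Icc.1 hi).1 (mem_Icc.1 hi).2

open Finset in
/-- the recurrence for `f(n) = E[X_n]`. -/
theorem stmt3 (p : ℝ) (hp : p ∈ Set.Ioo (0 : ℝ) 1) :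
    EX p 0 = 0 ∧ EX p 1 = 0 ∧
      ∀ n : ℕ, 2 ≤ n →
        EX p n = ∑ i ∈ Finset.Icc 2 n,
          (1 - (1 - p) ^ (i - 1)) * (1 - p) ^ ((i - 1).choose 2) * (EX p (n - i + 1) + 1) :=
  stmt3_general p

end
end
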